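/- arXiv:math/0404063 — 5 statements merged into one kernel-verified Lean document; each statement's English description precedes it below -/
import Mathlib

section
/- Let K be a field, n a nonnegative integer, x_1, …, x_{n+1} pairwise distinct elements of K, and f, g : K → K. Then the n-th iterated divided difference of the product fg at x_1, …, x_{n+1} satisfies the Leibniz formula: Σ_{j=1}^{n+1} f(x_j)g(x_j)/∏_{l ≠ j}(x_j − x_l) = Σ_{k=0}^{n} ( Σ_{j=1}^{k+1} f(x_j)/∏_{1 ≤ l ≤ k+1, l ≠ j}(x_j − x_l) ) · ( Σ_{j=k+1}^{n+1} g(x_j)/∏_{k+1 ≤ l ≤ n+1, l ≠ j}(x_j − x_l) ). -/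
/-!
Writing `D_s(h) = ∑_{j ∈ s} h(x_j) / ∏_{l ∈ s, l ≠ j} (x_j - x_l)`, deleting a node `a`
from `s` amounts to multiplying `h` by `y - x_a`. Subtracting two such deletions gives the
recurrence `D_{s∖a}(h) - D_{s∖b}(h) = (x_b - x_a) D_s(h)`. The Leibniz formula follows by
induction on the number of nodes: applying the recurrence to `f g` and to each factor, the inner
sums telescope into `(x_b - x_a)` times the Leibniz sum for the larger interval.
-/

open Finset

section DividedDifference

variable {ι K : Type*} [DecidableEq ι] [Field K]

def dividedDifference (x : ι → K) (h : K → K) (s : Finset ι) : K :=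
  ∑ j ∈ s, h (x j) / ∏ l ∈ s.erase j, (x j - x l)

theorem dividedDifference_erase (x : ι → K) (h : K → K) {s : Finset ι} {a : ι}
    (hx : Set.InjOn x s) (ha : a ∈ s) :
    dividedDifference x h (s.erase a) = dividedDifference x (fun y => h y * (y - x a)) s := by
  unfold dividedDifference
  rw [← sum_erase s (a := a) (by simp)]
  refine sum_congr rfl fun j hj => ?_
  obtain ⟨hja, hjs⟩ := mem_erase.1 hj
  have hxja : x j - x a ≠ 0 := sub_ne_zero.2 (hx.ne hjs ha hja)
  rw [← mul_prod_erase (s.erase j) (fun l => x j - x l) (mem_erase.2 ⟨Ne.symm hja, ha⟩),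
    erase_right_comm, mul_comm (x j - x a), mul_div_mul_right _ _ hxja]

theorem dividedDifference_erase_sub_erase (x : ι → K) (h : K → K) {s : Finset ι} {a b : ι}
    (hx : Set.InjOn x s) (ha : a ∈ s) (hb : b ∈ s) :
    dividedDifference x h (s.erase a) - dividedDifference x h (s.erase b)
      = (x b - x a) * dividedDifference x h s := by
  rw [dividedDifference_erase x h hx ha, dividedDifference_erase x h hx hb]
  simp only [dividedDifference, ← sum_sub_distrib, mul_sum]
  exact sum_congr rfl fun j _ => by ring

theorem dividedDifference_Icc_succ_sub (x : ℕ → K) (h : K → K) {a b : ℕ} (hab : a ≤ b)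
    (hx : Set.InjOn x (Icc a (b + 1))) :
    dividedDifference x h (Icc (a + 1) (b + 1)) - dividedDifference x h (Icc a b)
      = (x (b + 1) - x a) * dividedDifference x h (Icc a (b + 1)) := by
  have := dividedDifference_erase_sub_erase x h hx (a := a) (b := b + 1)
    (mem_coe.2 (mem_Icc.2 ⟨le_rfl, by omega⟩)) (mem_coe.2 (mem_Icc.2 ⟨by omega, le_rfl⟩))
  rwa [Icc_erase_left, ← Icc_add_one_left_eq_Ioc, Icc_erase_right, Ico_add_one_right_eq_Icc]
    at this

theorem dividedDifference_mul_sub_mul (x : ℕ → K) (f g : K → K) {a c b : ℕ} (hac : a ≤ c)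
    (hcb : c ≤ b) (hx : Set.InjOn x (Icc a (b + 1))) :
    dividedDifference x f (Icc (a + 1) (c + 1)) * dividedDifference x g (Icc (c + 1) (b + 1))
        - dividedDifference x f (Icc a c) * dividedDifference x g (Icc c b)
      = (x (c + 1) - x a) *
            (dividedDifference x f (Icc a (c + 1)) * dividedDifference x g (Icc (c + 1) (b + 1)))
        + (x (b + 1) - x c) *
            (dividedDifference x f (Icc a c) * dividedDifference x g (Icc c (b + 1))) := by
  have hf := dividedDifference_Icc_succ_sub x f hac
    (hx.mono (coe_subset.2 (Icc_subset_Icc le_rfl (by omega))))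
  have hg := dividedDifference_Icc_succ_sub x g hcb
    (hx.mono (coe_subset.2 (Icc_subset_Icc hac le_rfl)))
  linear_combination dividedDifference x g (Icc (c + 1) (b + 1)) * hf
    + dividedDifference x f (Icc a c) * hg

theorem dividedDifference_mul (x : ℕ → K) (f g : K → K) (a d : ℕ)
    (hx : Set.InjOn x (Icc a (a + d))) :
    dividedDifference x (fun y => f y * g y) (Icc a (a + d))
      = ∑ k ∈ range (d + 1),
          dividedDifference x f (Icc a (a + k)) * dividedDifference x g (Icc (a + k) (a + d)) := by
  induction d generalizing a with
  | zero => simp [dividedDifference]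
  | succ d ih =>
    rw [← add_assoc] at hx ⊢
    set b := a + d
    set T := fun k => dividedDifference x f (Icc a (a + k)) *
      dividedDifference x g (Icc (a + k) (b + 1))
    have hba : x (b + 1) - x a ≠ 0 := sub_ne_zero.2 <|
      hx.ne (mem_coe.2 (mem_Icc.2 ⟨by omega, le_rfl⟩))
        (mem_coe.2 (mem_Icc.2 ⟨le_rfl, by omega⟩)) (by omega)
    have ih₁ := ih (a + 1) (hx.mono (coe_subset.2 (Icc_subset_Icc (by omega) (by omega))))
    have ih₂ := ih a (hx.mono (coe_subset.2 (Icc_subset_Icc le_rfl (by omega))))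
    rw [add_right_comm a 1 d] at ih₁
    apply mul_left_cancel₀ hba
    calc (x (b + 1) - x a) * dividedDifference x (fun y => f y * g y) (Icc a (b + 1))
        = dividedDifference x (fun y => f y * g y) (Icc (a + 1) (b + 1))
          - dividedDifference x (fun y => f y * g y) (Icc a b) :=
          (dividedDifference_Icc_succ_sub x _ (by omega) hx).symm
      _ = ∑ k ∈ range (d + 1),
            ((x (a + k + 1) - x a) * T (k + 1) + (x (b + 1) - x (a + k)) * T k) := by
          rw [ih₁, ih₂, ← sum_sub_distrib]
          refine sum_congr rfl fun k hk => ?_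
          rw [add_right_comm a 1 k]
          exact dividedDifference_mul_sub_mul x f g (by omega)
            (by simp only [mem_range] at hk; omega) hx
      _ = ∑ k ∈ range (d + 2), (x (a + k) - x a) * T k
            + ∑ k ∈ range (d + 2), (x (b + 1) - x (a + k)) * T k := by
          -- the added terms `k = 0` and `k = d + 1` have a vanishing factor
          rw [sum_add_distrib, sum_range_succ' _ (d + 1), sum_range_succ _ (d + 1)]
          simp [b, add_assoc]
      _ = (x (b + 1) - x a) * ∑ k ∈ range (d + 2), T k := by
          rw [← sum_add_distrib, mul_sum]
          exact sum_congr rfl fun k _ => by ring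

end DividedDifference

/-- **Leibniz formula for iterated divided differences.**
For a field `K`, pairwise distinct points `x 1, …, x (n+1)` in `K`, and functions
`f, g : K → K`, the `n`-th iterated divided difference of the product `f * g` at
`x 1, …, x (n+1)` equals
`∑_{k=0}^{n} (∂-difference of f at x 1, …, x (k+1)) * (∂-difference of g at x (k+1), …, x (n+1))`. -/
theorem divided_difference_leibniz {K : Type*} [Field K] (n : ℕ) (x : ℕ → K) (f g : K → K)
    (hx : ∀ j ∈ Finset.Icc 1 (n + 1), ∀ l ∈ Finset.Icc 1 (n + 1), j ≠ l → x j ≠ x l) :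
    ∑ j ∈ Finset.Icc 1 (n + 1),
        f (x j) * g (x j) / ∏ l ∈ (Finset.Icc 1 (n + 1)).erase j, (x j - x l)
      = ∑ k ∈ Finset.range (n + 1),
          (∑ j ∈ Finset.Icc 1 (k + 1),
              f (x j) / ∏ l ∈ (Finset.Icc 1 (k + 1)).erase j, (x j - x l)) *
          (∑ j ∈ Finset.Icc (k + 1) (n + 1),
              g (x j) / ∏ l ∈ (Finset.Icc (k + 1) (n + 1)).erase j, (x j - x l)) := by
  have hinj : Set.InjOn x (Icc 1 (1 + n)) := by
    rw [add_comm 1 n]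
    exact fun j hj l hl hxjl => by_contra fun hjl => hx j hj l hl hjl hxjl
  simpa only [dividedDifference, add_comm 1] using dividedDifference_mul x f g 1 n hinj
end

section
/- Let K be a field, k ≥ 1 an integer, x_1, …, x_{k+1} pairwise distinct elements of K, u, v ∈ K, and c_1, …, c_{k−1} ∈ K, with 1 − v x_j ≠ 0 for all 1 ≤ j ≤ k+1. Then the k-th iterated divided difference of the function b ↦ (1 − u b)/(1 − v b) · ∏_{i=1}^{k−1}(1 − b c_i) at the points x_1, …, x_{k+1} satisfies: Σ_{j=1}^{k+1} [ (1 − u x_j)/(1 − v x_j) · ∏_{i=1}^{k−1}(1 − x_j c_i) ] / ∏_{l ≠ j}(x_j − x_l) = (v − u) · ∏_{i=1}^{k−1}(v − c_i) / ∏_{j=1}^{k+1}(1 − v x_j). -/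
/-!
Lagrange interpolation writes a polynomial `N` of degree `< n` as
`∑ j, N(x_j) ∏_{l ≠ j} (b - x_l) / (x_j - x_l)`. Applying `reflect (n - 1)`, i.e.
`b ^ (n - 1) N(1 / b)`, and evaluating at `v` turns `∏_{l ≠ j} (b - x_l)` into
`∏_{l ≠ j} (1 - v x_l) = ∏_l (1 - v x_l) / (1 - v x_j)`, so the divided difference of
`N(b) / (1 - v b)` is `(reflect (n - 1) N)(v) / ∏_l (1 - v x_l)`, with no case split on `v = 0`.
For `N = (1 - u b) ∏ (1 - c_i b)` the reflection is `(b - u) ∏ (b - c_i)`.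
-/

open Polynomial Finset

namespace Polynomial

variable {R : Type*}

theorem reflect_sum [Semiring R] {ι : Type*} (s : Finset ι) (f : ι → R[X]) (n : ℕ) :
    reflect n (∑ i ∈ s, f i) = ∑ i ∈ s, reflect n (f i) :=
  map_sum (⟨⟨reflect n, reflect_zero⟩, fun f g => reflect_add f g n⟩ : R[X] →+ R[X]) f s

theorem degree_reflect_lt [Semiring R] {p : R[X]} {n : ℕ} (hp : p.natDegree ≤ n) :
    (reflect n p).degree < ↑(n + 1) :=
  degree_le_natDegree.trans_lt <| by
    exact_mod_cast Nat.lt_succ_of_le (natDegree_reflect_le.trans (max_le le_rfl hp))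

theorem reflect_prod_of_natDegree_le_one [CommSemiring R] {ι : Type*} [DecidableEq ι]
    (s : Finset ι) (f : ι → R[X]) (hf : ∀ i ∈ s, (f i).natDegree ≤ 1) :
    reflect #s (∏ i ∈ s, f i) = ∏ i ∈ s, reflect 1 (f i) := by
  induction s using Finset.induction_on with
  | empty => simp
  | insert a t ha ih =>
    have hprod : (∏ i ∈ t, f i).natDegree ≤ #t :=
      (natDegree_prod_le _ _).trans <| by
        simpa using Finset.sum_le_card_nsmul t _ 1 fun i hi => hf i (mem_insert_of_mem hi)
    rw [prod_insert ha, prod_insert ha, card_insert_of_notMem ha, add_comm,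
      reflect_mul _ _ (hf a (mem_insert_self a t)) hprod,
      ih fun i hi => hf i (mem_insert_of_mem hi)]

theorem reflect_one_X_sub_C [Ring R] (a : R) : reflect 1 (X - C a) = 1 - C a * X := by
  simp [reflect_sub]

theorem reflect_prod_X_sub_C [CommRing R] {ι : Type*} [DecidableEq ι] (s : Finset ι)
    (a : ι → R) :
    reflect #s (∏ i ∈ s, (X - C (a i))) = ∏ i ∈ s, (1 - C (a i) * X) := by
  rw [reflect_prod_of_natDegree_le_one _ _ fun i _ => (natDegree_X_sub_C_le (a i))]
  simp_rw [reflect_one_X_sub_C]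

end Polynomial

namespace Lagrange

variable {F ι : Type*} [Field F]

theorem natDegree_basisDivisor_le (a b : F) : (basisDivisor a b).natDegree ≤ 1 :=
  (natDegree_C_mul_le _ _).trans (natDegree_X_sub_C_le b)

theorem eval_reflect_basis [DecidableEq ι] (s : Finset ι) (x : ι → F) (v : F) {j : ι}
    (hj : j ∈ s) :
    ((Lagrange.basis s x j).reflect (#s - 1)).eval v =
      (∏ l ∈ s.erase j, (1 - v * x l)) / ∏ l ∈ s.erase j, (x j - x l) := by
  rw [Lagrange.basis, ← card_erase_of_mem hj,
    reflect_prod_of_natDegree_le_one _ _ fun l _ => natDegree_basisDivisor_le _ _]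
  simp only [basisDivisor, reflect_C_mul, reflect_one_X_sub_C, eval_prod, eval_mul, eval_C,
    eval_sub, eval_one, eval_X]
  rw [div_eq_mul_inv, ← prod_inv_distrib, ← prod_mul_distrib]
  exact prod_congr rfl fun l _ => by ring

theorem sum_eval_div_one_sub_mul_div_prod_sub [DecidableEq ι] {s : Finset ι} {x : ι → F}
    (hx : Set.InjOn x s) {v : F} (hv : ∀ j ∈ s, 1 - v * x j ≠ 0) {N : F[X]}
    (hN : N.degree < #s) :
    ∑ j ∈ s, N.eval (x j) / (1 - v * x j) / ∏ l ∈ s.erase j, (x j - x l) =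
      (N.reflect (#s - 1)).eval v / ∏ j ∈ s, (1 - v * x j) := by
  conv_rhs => rw [eq_interpolate hx hN, interpolate_apply]
  rw [reflect_sum, eval_finsetSum, sum_div]
  refine sum_congr rfl fun j hj => ?_
  have hnodes : ∏ l ∈ s.erase j, (x j - x l) ≠ 0 := prod_ne_zero_iff.mpr fun l hl =>
    sub_ne_zero.mpr (hx.ne hj (mem_of_mem_erase hl) (ne_of_mem_erase hl).symm)
  have hpoles : ∏ l ∈ s.erase j, (1 - v * x l) ≠ 0 :=
    prod_ne_zero_iff.mpr fun l hl => hv l (mem_of_mem_erase hl)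
  rw [reflect_C_mul, eval_mul, eval_C, eval_reflect_basis s x v hj, ← mul_prod_erase s _ hj]
  field_simp [hv j hj]

end Lagrange

/-- **Key lemma for the bibasic summation formula (Lemma (Main)).**
Let `K` be a field, `k ≥ 1` an integer, `x 1, …, x (k+1)` pairwise distinct elements
of `K`, `u, v ∈ K` and `c 1, …, c (k-1) ∈ K`, with `1 - v * x j ≠ 0` for all
`1 ≤ j ≤ k+1`.  Then the `k`-th iterated divided difference of
`b ↦ (1 - u b)/(1 - v b) * ∏_{i=1}^{k-1} (1 - b c i)` at `x 1, …, x (k+1)` equals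
`(v - u) * ∏_{i=1}^{k-1} (v - c i) / ∏_{j=1}^{k+1} (1 - v x j)`. -/
theorem divided_difference_bibasic_lemma {K : Type*} [Field K] (k : ℕ) (hk : 1 ≤ k)
    (x c : ℕ → K) (u v : K)
    (hx : ∀ j ∈ Finset.Icc 1 (k + 1), ∀ l ∈ Finset.Icc 1 (k + 1), j ≠ l → x j ≠ x l)
    (hv : ∀ j ∈ Finset.Icc 1 (k + 1), 1 - v * x j ≠ 0) :
    ∑ j ∈ Finset.Icc 1 (k + 1),
        ((1 - u * x j) / (1 - v * x j) * ∏ i ∈ Finset.Icc 1 (k - 1), (1 - x j * c i)) /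
          ∏ l ∈ (Finset.Icc 1 (k + 1)).erase j, (x j - x l)
      = (v - u) * (∏ i ∈ Finset.Icc 1 (k - 1), (v - c i)) /
          ∏ j ∈ Finset.Icc 1 (k + 1), (1 - v * x j) := by
  obtain ⟨m, rfl⟩ : ∃ m, k = m + 1 := ⟨k - 1, by omega⟩
  simp only [Nat.add_sub_cancel]
  set M : K[X] := (X - C u) * ∏ i ∈ Icc 1 m, (X - C (c i))
  have hM : M.natDegree ≤ m + 1 := by
    simpa [add_comm] using natDegree_mul_le.trans
      (add_le_add (natDegree_X_sub_C_le u) (natDegree_finsetProd_X_sub_C_eq_card (Icc 1 m) c).le)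
  have hreflect : reflect (m + 1) M = (1 - C u * X) * ∏ i ∈ Icc 1 m, (1 - C (c i) * X) := by
    have hprod := reflect_prod_X_sub_C (Icc 1 m) c
    rw [Nat.card_Icc, Nat.add_sub_cancel] at hprod
    rw [add_comm, reflect_mul _ _ (natDegree_X_sub_C_le u) (by simp), reflect_one_X_sub_C, hprod]
  have hdeg : (reflect (m + 1) M).degree < #(Icc 1 (m + 1 + 1)) := by
    simpa using degree_reflect_lt hM
  have hinj : Set.InjOn x (Icc 1 (m + 1 + 1)) := fun j hj l hl =>
    not_imp_not.mp (hx j hj l hl)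
  calc _ = ∑ j ∈ Icc 1 (m + 1 + 1), (reflect (m + 1) M).eval (x j) / (1 - v * x j) /
        ∏ l ∈ (Icc 1 (m + 1 + 1)).erase j, (x j - x l) := by
        refine sum_congr rfl fun j _ => ?_
        simp [hreflect, eval_prod, div_mul_eq_mul_div, mul_comm (x j)]
    _ = _ := Lagrange.sum_eval_div_one_sub_mul_div_prod_sub hinj hv hdeg
    _ = _ := by
      rw [Nat.card_Icc, Nat.add_sub_cancel, Nat.add_sub_cancel, reflect_reflect]
      simp [M, eval_prod]
end

section
/- Let K be a field (or commutative ring), n a nonnegative integer, and a, x, q ∈ K. Then (x; q)_n = Σ_{k=0}^{n} (−1)^k q^{k(k−1)/2} · binom_q(n, k) · ∏_{j=1}^{k}(x − a q^j) · (a q^{k+1}; q)_{n−k}, where binom_q(n, k) denotes the Gaussian binomial coefficient (the q-binomial polynomial evaluated at q). -/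
/-- The Gaussian (`q`-)binomial coefficient `[n choose k]_q`, defined by the
`q`-Pascal recursion `[n+1, k+1]_q = [n, k]_q + q^(k+1) * [n, k+1]_q`.  It is the
evaluation at `q` of the Gaussian binomial polynomial, and satisfies
`[n, k]_q = (q;q)_n / ((q;q)_k (q;q)_{n-k})` whenever these are nonzero. -/
def qBinom {K : Type*} [CommRing K] (q : K) : ℕ → ℕ → K
  | _, 0 => 1
  | 0, _ + 1 => 0
  | n + 1, k + 1 => qBinom q n k + q ^ (k + 1) * qBinom q n (k + 1)

lemma qBinom_eq_zero {K : Type*} [CommRing K] (q : K) : ∀ n k, n < k → qBinom q n k = 0 := by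
  intro n
  induction n with
  | zero => intro k hk; match k, hk with | k+1, _ => rfl
  | succ n ih =>
    intro k hk
    match k, hk with
    | k+1, hk =>
      show qBinom q n k + q ^ (k + 1) * qBinom q n (k + 1) = 0
      rw [ih k (by omega), ih (k+1) (by omega)]
      ring

lemma halfExp (k : ℕ) : (k+1)*k/2 = k*(k-1)/2 + k := by
  cases k with
  | zero => rfl
  | succ j =>
    simp only [Nat.succ_sub_one]
    rw [show (j+1+1)*(j+1) = (j+1)*j + (j+1)*2 by ring,
      Nat.add_mul_div_right _ _ (by norm_num : 0 < 2)]

section Aux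

variable {K : Type*} [CommRing K]

/-- The summand in the Newton-type expansion. -/
def Fterm (n : ℕ) (a x q : K) (k : ℕ) : K :=
  (-1 : K) ^ k * q ^ (k * (k - 1) / 2) * qBinom q n k *
    (∏ j ∈ Finset.Icc 1 k, (x - a * q ^ j)) *
    ∏ j ∈ Finset.range (n - k), (1 - a * q ^ (k + 1) * q ^ j)

def Aterm (n : ℕ) (a x q : K) (k : ℕ) : K :=
  (-1 : K) ^ (k+1) * q ^ ((k+1) * k / 2) * qBinom q n k *
    (∏ j ∈ Finset.Icc 1 (k+1), (x - a * q ^ j)) *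
    ∏ j ∈ Finset.range (n - k), (1 - a * q ^ (k + 2) * q ^ j)

def Xterm (n : ℕ) (a x q : K) (k : ℕ) : K :=
  (-1 : K) ^ k * q ^ (k * (k - 1) / 2) * q ^ k * qBinom q n k *
    (∏ j ∈ Finset.Icc 1 k, (x - a * q ^ j)) *
    ∏ j ∈ Finset.range (n + 1 - k), (1 - a * q ^ (k + 1) * q ^ j)

lemma Xterm_zero (n : ℕ) (a x q : K) : Xterm n a x q 0 = Fterm (n+1) a x q 0 := by
  simp [Xterm, Fterm, qBinom]

lemma Xterm_top (n : ℕ) (a x q : K) : Xterm n a x q (n+1) = 0 := by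
  simp [Xterm, qBinom_eq_zero q n (n+1) (by omega)]

lemma Aterm_add_Xterm_succ (n : ℕ) (a x q : K) (k : ℕ) :
    Aterm n a x q k + Xterm n a x q (k+1) = Fterm (n+1) a x q (k+1) := by
  simp only [Aterm, Xterm, Fterm, Nat.succ_sub_succ, Nat.succ_sub_one, Nat.sub_zero,
    show qBinom q (n+1) (k+1) = qBinom q n k + q ^ (k + 1) * qBinom q n (k + 1) from rfl,
    show k+1+1 = k+2 from rfl]
  ring

lemma Gstep (n : ℕ) (a x q : K) (k : ℕ) (hk : k ≤ n) :
    ((-1 : K) ^ k * q ^ (k * (k - 1) / 2) * qBinom q n k *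
      (∏ j ∈ Finset.Icc 1 k, (x * q - (a * q) * q ^ j)) *
      ∏ j ∈ Finset.range (n - k), (1 - (a * q) * q ^ (k + 1) * q ^ j)) * (1 - x)
    = Aterm n a x q k + Xterm n a x q k := by
  have hP : (∏ j ∈ Finset.Icc 1 k, (x * q - (a * q) * q ^ j))
      = q ^ k * ∏ j ∈ Finset.Icc 1 k, (x - a * q ^ j) := by
    calc (∏ j ∈ Finset.Icc 1 k, (x * q - (a * q) * q ^ j))
        = ∏ j ∈ Finset.Icc 1 k, (q * (x - a * q ^ j)) :=
          Finset.prod_congr rfl fun j _ => by ring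
      _ = (∏ _j ∈ Finset.Icc 1 k, q) * ∏ j ∈ Finset.Icc 1 k, (x - a * q ^ j) :=
          Finset.prod_mul_distrib
      _ = q ^ k * ∏ j ∈ Finset.Icc 1 k, (x - a * q ^ j) := by
          rw [Finset.prod_const, Nat.card_Icc, Nat.add_sub_cancel]
  have hR : (∏ j ∈ Finset.range (n - k), (1 - (a * q) * q ^ (k + 1) * q ^ j))
      = ∏ j ∈ Finset.range (n - k), (1 - a * q ^ (k + 2) * q ^ j) :=
    Finset.prod_congr rfl fun j _ => by ring
  have hQ : (∏ j ∈ Finset.range (n + 1 - k), (1 - a * q ^ (k + 1) * q ^ j))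
      = (∏ j ∈ Finset.range (n - k), (1 - a * q ^ (k + 2) * q ^ j)) * (1 - a * q ^ (k + 1)) := by
    rw [show n + 1 - k = (n - k) + 1 by omega, Finset.prod_range_succ']
    congr 1
    · exact Finset.prod_congr rfl fun j _ => by ring
    · ring
  have hA : (∏ j ∈ Finset.Icc 1 (k+1), (x - a * q ^ j))
      = (∏ j ∈ Finset.Icc 1 k, (x - a * q ^ j)) * (x - a * q ^ (k+1)) :=
    Finset.prod_Icc_succ_top (by omega) _
  rw [hP, hR]
  unfold Aterm Xterm
  rw [hQ, hA, halfExp k, pow_add]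
  ring

lemma newton_main (n : ℕ) (a x q : K) :
    ∏ j ∈ Finset.range n, (1 - x * q ^ j)
      = ∑ k ∈ Finset.range (n + 1), Fterm n a x q k := by
  induction n generalizing a x with
  | zero => simp [Fterm, qBinom]
  | succ n ih =>
    have h1 : ∏ j ∈ Finset.range (n+1), (1 - x * q ^ j)
        = (∏ j ∈ Finset.range n, (1 - (x * q) * q ^ j)) * (1 - x) := by
      rw [Finset.prod_range_succ']
      congr 1
      · exact Finset.prod_congr rfl fun j _ => by ring
      · ring
    rw [h1, ih (a * q) (x * q), Finset.sum_mul]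
    have h2 : ∀ k ∈ Finset.range (n+1),
        Fterm n (a * q) (x * q) q k * (1 - x) = Aterm n a x q k + Xterm n a x q k := by
      intro k hk
      exact Gstep n a x q k (by simpa using Nat.lt_succ_iff.mp (Finset.mem_range.mp hk))
    rw [Finset.sum_congr rfl h2, Finset.sum_add_distrib]
    have h3 : ∑ k ∈ Finset.range (n+1), Xterm n a x q k
        = (∑ k ∈ Finset.range (n+1), Xterm n a x q (k+1)) + Fterm (n+1) a x q 0 := by
      rw [Finset.sum_range_succ' (Xterm n a x q) n,
        Finset.sum_range_succ (fun k => Xterm n a x q (k+1)) n, Xterm_top, Xterm_zero]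
      ring
    rw [h3, ← add_assoc, ← Finset.sum_add_distrib]
    rw [Finset.sum_congr rfl (fun k _ => Aterm_add_Xterm_succ n a x q k)]
    rw [Finset.sum_range_succ' (Fterm (n+1) a x q) (n+1)]

end Aux

/-- **A Newton-type expansion of the `q`-shifted factorial.**
In a field `K`, for all `a, x, q ∈ K` and `n ≥ 0`:
`(x;q)_n = ∑_{k=0}^{n} (-1)^k q^(k(k-1)/2) [n choose k]_q ∏_{j=1}^{k}(x - a q^j) (a q^(k+1); q)_{n-k}`. -/
theorem qPochhammer_newton_expansion {K : Type*} [Field K] (n : ℕ) (a x q : K) :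
    ∏ j ∈ Finset.range n, (1 - x * q ^ j)
      = ∑ k ∈ Finset.range (n + 1),
          (-1 : K) ^ k * q ^ (k * (k - 1) / 2) * qBinom q n k *
            (∏ j ∈ Finset.Icc 1 k, (x - a * q ^ j)) *
            ∏ j ∈ Finset.range (n - k), (1 - a * q ^ (k + 1) * q ^ j) := by
  exact newton_main n a x q
end

section
/- Let q, β be complex numbers with |q| < 1 and β q^j ≠ 1 for all integers j ≥ 1. Then Sylvester's formula holds: Σ_{n=0}^{∞} (−1)^n β^n q^{n(3n+1)/2} (1 − β q^{2n+1}) / ( (q; q)_n · (β q^{n+1}; q)_∞ ) = 1, where the series converges. -/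
/-!
Put `tₙ(x) = (-1)ⁿ (1 - x q^(2n+1)) xⁿ q^(n(3n+1)/2) (xq; q)ₙ / (q; q)ₙ`. Since
`(βq; q)_∞ = (βq; q)ₙ (βq^(n+1); q)_∞`, the `n`-th summand is `tₙ(β) / (βq; q)_∞`, so it suffices to
show `G(β) = (βq; q)_∞` for `G(x) = ∑ tₙ(x)`. The differences `tₙ(x) - (1 - xq) tₙ(xq)` telescope to
a remainder tending to `0`, which gives `G(x) = (1 - xq) G(xq)`, hence
`G(β) = (βq; q)_N G(βq^N)` for every `N`. As `N → ∞` the first factor tends to `(βq; q)_∞`, and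
`G(βq^N) → G(0) = 1` by dominated convergence: for `‖x‖ ≤ R` the terms are bounded by a constant
times `Rⁿ ‖q‖^(n²)`.
-/

open Finset Filter Topology

noncomputable section

def qPochhammer (a q : ℂ) (n : ℕ) : ℂ := ∏ j ∈ range n, (1 - a * q ^ j)

section qPochhammer

variable {a q : ℂ}

lemma qPochhammer_succ (a q : ℂ) (n : ℕ) :
    qPochhammer a q (n + 1) = qPochhammer a q n * (1 - a * q ^ n) :=
  prod_range_succ _ n

lemma qPochhammer_succ' (a q : ℂ) (n : ℕ) :
    qPochhammer a q (n + 1) = (1 - a) * qPochhammer (a * q) q n := by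
  simp only [qPochhammer, prod_range_succ', pow_zero, mul_one, pow_succ, mul_assoc, mul_comm]

lemma qPochhammer_ne_zero (ha : ∀ j, a * q ^ j ≠ 1) (n : ℕ) : qPochhammer a q n ≠ 0 :=
  prod_ne_zero_iff.2 fun j _ => sub_ne_zero.2 (ha j).symm

lemma norm_qPochhammer_le {R : ℝ} (hq : ‖q‖ < 1) (ha : ‖a‖ ≤ R) (n : ℕ) :
    ‖qPochhammer a q n‖ ≤ Real.exp (R / (1 - ‖q‖)) := by
  have hR : 0 ≤ R := (norm_nonneg a).trans ha
  calc ‖qPochhammer a q n‖ ≤ ∏ j ∈ range n, (1 + R * ‖q‖ ^ j) := by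
        refine (Finset.norm_prod_le _ _).trans
          (prod_le_prod (fun _ _ => norm_nonneg _) fun j _ => ?_)
        calc ‖1 - a * q ^ j‖ ≤ 1 + ‖a‖ * ‖q‖ ^ j := by
              simpa using norm_sub_le (1 : ℂ) (a * q ^ j)
          _ ≤ 1 + R * ‖q‖ ^ j := by gcongr
    _ ≤ Real.exp (∑ j ∈ range n, R * ‖q‖ ^ j) :=
        Real.prod_one_add_le_exp_sum _ fun j => by positivity
    _ ≤ Real.exp (R / (1 - ‖q‖)) := by
        rw [← mul_sum, div_eq_mul_inv, ← tsum_geometric_of_lt_one (norm_nonneg q) hq]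
        gcongr
        exact (summable_geometric_of_lt_one (norm_nonneg q) hq).sum_le_tsum _
          fun j _ => by positivity

lemma summable_norm_neg_mul_pow (a : ℂ) (hq : ‖q‖ < 1) :
    Summable fun j => ‖-(a * q ^ j)‖ := by
  simpa [norm_mul, norm_pow] using
    (summable_geometric_of_lt_one (norm_nonneg q) hq).mul_left ‖a‖

lemma multipliable_one_sub_mul_pow (a : ℂ) (hq : ‖q‖ < 1) :
    Multipliable fun j => 1 - a * q ^ j := by
  simpa [sub_eq_add_neg] using multipliable_one_add_of_summable (summable_norm_neg_mul_pow a hq)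

lemma tprod_one_sub_mul_pow_ne_zero (hq : ‖q‖ < 1) (ha : ∀ j, a * q ^ j ≠ 1) :
    ∏' j, (1 - a * q ^ j) ≠ 0 := by
  simpa [sub_eq_add_neg] using tprod_one_add_ne_zero_of_summable
    (fun j => by simpa [← sub_eq_add_neg, sub_eq_zero] using (ha j).symm)
    (summable_norm_neg_mul_pow a hq)

lemma tendsto_qPochhammer (a : ℂ) (hq : ‖q‖ < 1) :
    Tendsto (qPochhammer a q) atTop (𝓝 (∏' j, (1 - a * q ^ j))) :=
  (multipliable_one_sub_mul_pow a hq).hasProd.tendsto_prod_nat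

lemma qPochhammer_mul_tprod (a : ℂ) (hq : ‖q‖ < 1) (n : ℕ) :
    qPochhammer a q n * ∏' j, (1 - a * q ^ n * q ^ j) = ∏' j, (1 - a * q ^ j) := by
  have htail : Multipliable fun j => 1 - a * q ^ (j + n) :=
    (multipliable_one_sub_mul_pow (a * q ^ n) hq).congr fun j => by ring
  rw [← htail.prod_mul_tprod_nat_mul' (f := fun j => 1 - a * q ^ j) (k := n), qPochhammer]
  exact congrArg _ (tprod_congr fun j => by ring)

lemma mul_pow_ne_one_of_norm_lt_one (ha : ‖a‖ < 1) (hq : ‖q‖ ≤ 1) (j : ℕ) :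
    a * q ^ j ≠ 1 := by
  intro h
  have hlt : ‖a * q ^ j‖ < 1 := by
    rw [norm_mul, norm_pow]
    exact mul_lt_one_of_nonneg_of_lt_one_left (norm_nonneg a) ha (pow_le_one₀ (norm_nonneg q) hq)
  rw [h, norm_one] at hlt
  exact hlt.false

lemma exists_norm_inv_qPochhammer_le (hq : ‖q‖ < 1) (ha : ∀ j, a * q ^ j ≠ 1) :
    ∃ M, ∀ n, ‖(qPochhammer a q n)⁻¹‖ ≤ M :=
  ((tendsto_qPochhammer a hq).inv₀ (tprod_one_sub_mul_pow_ne_zero hq ha)).norm.bddAbove_range.imp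
    fun _ hM n => hM ⟨n, rfl⟩

end qPochhammer

lemma pentagonal_neg_natCast (n : ℕ) : pentagonal (-n) = n * (3 * n + 1) / 2 := by
  rw [pentagonal_neg]
  exact_mod_cast Int.toNat_natCast (n * (3 * n + 1) / 2)

lemma pentagonal_neg_succ (n : ℕ) :
    pentagonal (-(n + 1 : ℕ)) = pentagonal (-n) + (3 * n + 2) := by
  have h₁ := two_mul_natCast_pentagonal_neg (n + 1 : ℕ)
  have h₀ := two_mul_natCast_pentagonal_neg n
  push_cast at h₁ h₀
  zify
  linarith

lemma mul_self_le_pentagonal_neg (n : ℕ) : n * n ≤ pentagonal (-n) := by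
  have h := two_mul_natCast_pentagonal_neg n
  zify
  nlinarith

lemma summable_pow_mul_pow_of_mul_self_le {R r : ℝ} (hR : 0 ≤ R) (hr0 : 0 ≤ r) (hr1 : r < 1)
    {e : ℕ → ℕ} (he : ∀ n, n * n ≤ e n) : Summable fun n => R ^ n * r ^ e n := by
  refine summable_geometric_two.of_norm_bounded_eventually_nat ?_
  have hsmall : ∀ᶠ n : ℕ in atTop, R * r ^ n ≤ 1 / 2 := by
    have := (tendsto_pow_atTop_nhds_zero_of_lt_one hr0 hr1).const_mul R
    rw [mul_zero] at this
    exact this.eventually (eventually_le_nhds one_half_pos)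
  filter_upwards [hsmall] with n hn
  calc ‖R ^ n * r ^ e n‖ = R ^ n * r ^ e n := Real.norm_of_nonneg (by positivity)
    _ ≤ R ^ n * r ^ (n * n) :=
        mul_le_mul_of_nonneg_left (pow_le_pow_of_le_one hr0 hr1.le (he n)) (by positivity)
    _ = (R * r ^ n) ^ n := by rw [mul_pow, ← pow_mul]
    _ ≤ (1 / 2) ^ n := by gcongr

section Sylvester

variable {q : ℂ}

def sylvesterWeight (q x : ℂ) (n : ℕ) : ℂ :=
  x ^ n * q ^ pentagonal (-n) * qPochhammer (x * q) q n / qPochhammer q q n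

def sylvesterTerm (q x : ℂ) (n : ℕ) : ℂ :=
  (-1) ^ n * (1 - x * q ^ (2 * n + 1)) * sylvesterWeight q x n

-- The factor `1 - qⁿ` makes the remainder vanish at `n = 0`.
def sylvesterRemainder (q x : ℂ) (n : ℕ) : ℂ :=
  (-1) ^ (n + 1) * (1 - q ^ n) * sylvesterWeight q x n

lemma sylvesterTerm_sub_eq (hq : ∀ j, q * q ^ j ≠ 1) (x : ℂ) (n : ℕ) :
    sylvesterTerm q x n - (1 - x * q) * sylvesterTerm q (x * q) n =
      sylvesterRemainder q x (n + 1) - sylvesterRemainder q x n := by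
  have hQ := qPochhammer_ne_zero hq n
  have hq' : 1 - q * q ^ n ≠ 0 := sub_ne_zero.2 (hq n).symm
  have hshift : (1 - x * q) * qPochhammer (x * q * q) q n =
      qPochhammer (x * q) q n * (1 - x * q * q ^ n) := by
    rw [← qPochhammer_succ', qPochhammer_succ]
  simp only [sylvesterTerm, sylvesterRemainder, sylvesterWeight, pentagonal_neg_succ,
    qPochhammer_succ, pow_succ]
  linear_combination (norm := skip) -((-1) ^ n * (x * q) ^ n * q ^ pentagonal (-n) *
    (1 - x * q * q ^ (2 * n + 1)) / qPochhammer q q n) * hshift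
  field_simp
  ring

lemma exists_norm_sylvesterWeight_le (hq : ‖q‖ < 1) (R : ℝ) :
    ∃ C, ∀ x : ℂ, ‖x‖ ≤ R → ∀ n,
      ‖sylvesterWeight q x n‖ ≤ C * (R ^ n * ‖q‖ ^ pentagonal (-n)) := by
  obtain ⟨M, hM⟩ :=
    exists_norm_inv_qPochhammer_le hq (mul_pow_ne_one_of_norm_lt_one hq hq.le)
  refine ⟨Real.exp (R / (1 - ‖q‖)) * M, fun x hx n => ?_⟩
  have hxq : ‖x * q‖ ≤ R := by
    rw [norm_mul]
    exact (mul_le_of_le_one_right (norm_nonneg x) hq.le).trans hx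
  have hR : 0 ≤ R := (norm_nonneg x).trans hx
  rw [sylvesterWeight, div_eq_mul_inv, norm_mul, norm_mul, norm_mul, norm_pow, norm_pow]
  calc ‖x‖ ^ n * ‖q‖ ^ pentagonal (-n) * ‖qPochhammer (x * q) q n‖ *
        ‖(qPochhammer q q n)⁻¹‖
      ≤ R ^ n * ‖q‖ ^ pentagonal (-n) * Real.exp (R / (1 - ‖q‖)) * M := by
        gcongr
        exacts [norm_qPochhammer_le hq hxq n, hM n]
    _ = Real.exp (R / (1 - ‖q‖)) * M * (R ^ n * ‖q‖ ^ pentagonal (-n)) := by ring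

lemma exists_norm_sylvesterTerm_le (hq : ‖q‖ < 1) (R : ℝ) :
    ∃ C, ∀ x : ℂ, ‖x‖ ≤ R → ∀ n,
      ‖sylvesterTerm q x n‖ ≤ C * (R ^ n * ‖q‖ ^ pentagonal (-n)) := by
  obtain ⟨C, hC⟩ := exists_norm_sylvesterWeight_le hq R
  refine ⟨(1 + R) * C, fun x hx n => ?_⟩
  have hfactor : ‖1 - x * q ^ (2 * n + 1)‖ ≤ 1 + R := by
    refine (norm_sub_le _ _).trans ?_
    rw [norm_one, norm_mul, norm_pow]
    gcongr
    exact (mul_le_of_le_one_right (norm_nonneg x) (pow_le_one₀ (norm_nonneg q) hq.le)).trans hx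
  rw [sylvesterTerm, norm_mul, norm_mul, norm_pow, norm_neg, norm_one, one_pow, one_mul, mul_assoc]
  gcongr
  · exact (norm_nonneg _).trans hfactor
  · exact hC x hx n

lemma summable_sylvesterTerm (hq : ‖q‖ < 1) (x : ℂ) : Summable (sylvesterTerm q x) := by
  obtain ⟨C, hC⟩ := exists_norm_sylvesterTerm_le hq ‖x‖
  exact .of_norm_bounded ((summable_pow_mul_pow_of_mul_self_le (norm_nonneg x) (norm_nonneg q) hq
    mul_self_le_pentagonal_neg).mul_left C) (hC x le_rfl)

lemma tendsto_sylvesterRemainder (hq : ‖q‖ < 1) (x : ℂ) :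
    Tendsto (sylvesterRemainder q x) atTop (𝓝 0) := by
  obtain ⟨C, hC⟩ := exists_norm_sylvesterWeight_le hq ‖x‖
  have hmajor := ((summable_pow_mul_pow_of_mul_self_le (norm_nonneg x) (norm_nonneg q) hq
    mul_self_le_pentagonal_neg).mul_left (2 * C)).tendsto_atTop_zero
  refine squeeze_zero_norm (fun n => ?_) hmajor
  have hfactor : ‖1 - q ^ n‖ ≤ 2 := by
    refine (norm_sub_le _ _).trans ?_
    rw [norm_one, norm_pow]
    linarith [pow_le_one₀ (norm_nonneg q) hq.le (n := n)]
  rw [sylvesterRemainder, norm_mul, norm_mul, norm_pow, norm_neg, norm_one, one_pow, one_mul,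
    mul_assoc]
  gcongr
  exact hC x le_rfl n

lemma tsum_sylvesterTerm_eq_mul (hq : ‖q‖ < 1) (x : ℂ) :
    ∑' n, sylvesterTerm q x n = (1 - x * q) * ∑' n, sylvesterTerm q (x * q) n := by
  have hs := summable_sylvesterTerm hq x
  have hs' := (summable_sylvesterTerm hq (x * q)).mul_left (1 - x * q)
  have htelescope :
      HasSum (fun n => sylvesterTerm q x n - (1 - x * q) * sylvesterTerm q (x * q) n) 0 := by
    rw [(hs.sub hs').hasSum_iff_tendsto_nat]
    have hW₀ : sylvesterRemainder q x 0 = 0 := by simp [sylvesterRemainder]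
    simp_rw [sylvesterTerm_sub_eq (mul_pow_ne_one_of_norm_lt_one hq hq.le) x, Finset.sum_range_sub,
      hW₀, sub_zero]
    exact tendsto_sylvesterRemainder hq x
  rw [← sub_eq_zero, ← tsum_mul_left, ← hs.tsum_sub hs', htelescope.tsum_eq]

lemma tsum_sylvesterTerm_eq_qPochhammer_mul (hq : ‖q‖ < 1) (x : ℂ) (N : ℕ) :
    ∑' n, sylvesterTerm q x n =
      qPochhammer (x * q) q N * ∑' n, sylvesterTerm q (x * q ^ N) n := by
  induction N with
  | zero => simp [qPochhammer]
  | succ N ih =>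
    rw [ih, tsum_sylvesterTerm_eq_mul hq, qPochhammer_succ,
      show x * q ^ (N + 1) = x * q ^ N * q by ring]
    ring

lemma continuous_sylvesterTerm (q : ℂ) (n : ℕ) : Continuous fun x => sylvesterTerm q x n := by
  simp only [sylvesterTerm, sylvesterWeight, qPochhammer]
  fun_prop

lemma tsum_sylvesterTerm_zero (q : ℂ) : ∑' n, sylvesterTerm q 0 n = 1 := by
  rw [tsum_eq_single 0 fun n hn => by simp [sylvesterTerm, sylvesterWeight, hn]]
  simp [sylvesterTerm, sylvesterWeight, qPochhammer, pentagonal]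

lemma tendsto_tsum_sylvesterTerm_mul_pow (hq : ‖q‖ < 1) (x : ℂ) :
    Tendsto (fun N => ∑' n, sylvesterTerm q (x * q ^ N) n) atTop (𝓝 1) := by
  obtain ⟨C, hC⟩ := exists_norm_sylvesterTerm_le hq ‖x‖
  have hxq : Tendsto (fun N => x * q ^ N) atTop (𝓝 0) := by
    simpa using (tendsto_pow_atTop_nhds_zero_of_norm_lt_one hq).const_mul x
  rw [← tsum_sylvesterTerm_zero q]
  refine tendsto_tsum_of_dominated_convergence
    ((summable_pow_mul_pow_of_mul_self_le (norm_nonneg x) (norm_nonneg q) hq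
      mul_self_le_pentagonal_neg).mul_left C)
    (fun n => ((continuous_sylvesterTerm q n).tendsto 0).comp hxq)
    (Eventually.of_forall fun N => hC _ ?_)
  rw [norm_mul, norm_pow]
  exact mul_le_of_le_one_right (norm_nonneg x) (pow_le_one₀ (norm_nonneg q) hq.le)

theorem hasSum_sylvesterTerm (hq : ‖q‖ < 1) (x : ℂ) :
    HasSum (sylvesterTerm q x) (∏' j, (1 - x * q * q ^ j)) := by
  have hlim :=
    (tendsto_qPochhammer (x * q) hq).mul (tendsto_tsum_sylvesterTerm_mul_pow hq x)
  simp only [mul_one, ← tsum_sylvesterTerm_eq_qPochhammer_mul hq] at hlim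
  exact (summable_sylvesterTerm hq x).hasSum_iff.2 (tendsto_nhds_unique tendsto_const_nhds hlim)

end Sylvester

end

/-- **Sylvester's formula.**
Let `q, β` be complex numbers with `|q| < 1` and `β q^j ≠ 1` for all `j ≥ 1`.  Then
`∑_{n=0}^{∞} (-1)^n β^n q^(n(3n+1)/2) (1 - β q^(2n+1)) / ((q;q)_n (β q^(n+1);q)_∞) = 1`,
the series being convergent with sum `1`. -/
theorem sylvester_formula (q β : ℂ) (hq : ‖q‖ < 1)
    (hβ : ∀ j : ℕ, 1 ≤ j → β * q ^ j ≠ 1) :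
    HasSum
      (fun n : ℕ =>
        (-1 : ℂ) ^ n * β ^ n * q ^ (n * (3 * n + 1) / 2) * (1 - β * q ^ (2 * n + 1)) /
          ((∏ j ∈ range n, (1 - q * q ^ j)) *
            ∏' j : ℕ, (1 - β * q ^ (n + 1) * q ^ j)))
      1 := by
  have hβq : ∀ j, β * q * q ^ j ≠ 1 := fun j => by
    simpa only [mul_assoc, ← pow_succ'] using hβ (j + 1) j.succ_pos
  have hP := tprod_one_sub_mul_pow_ne_zero hq hβq
  have hsum := (hasSum_sylvesterTerm hq β).div_const (∏' j, (1 - β * q * q ^ j))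
  rw [div_self hP] at hsum
  refine hsum.congr_fun fun n => ?_
  have hsplit := qPochhammer_mul_tprod (β * q) hq n
  have htail := right_ne_zero_of_mul (hsplit ▸ hP)
  rw [← hsplit, show β * q ^ (n + 1) = β * q * q ^ n by ring, sylvesterTerm, sylvesterWeight,
    pentagonal_neg_natCast, ← qPochhammer]
  field_simp [qPochhammer_ne_zero hβq n,
    qPochhammer_ne_zero (mul_pow_ne_one_of_norm_lt_one hq hq.le) n]
end

section
/- Let K be a field, n a nonnegative integer, and a, c, p, q ∈ K with c ≠ 0, 1 − c ≠ 0 and with all factors (c q^{n−k}; q)_{k+1} and (a p^{n−k}; p)_{k+1} nonzero for 0 ≤ k ≤ n. Then the following equivalent form of Gosper's bibasic identity holds: Σ_{k=0}^{n} (1 − a p^{n−k} q^{n−k}) · (q^{n−k+1}; q)_k (a p^{n−k+1}/c; p)_k · c^k / ( (c q^{n−k}; q)_{k+1} (a p^{n−k}; p)_{k+1} ) = 1/(1 − c). -/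
open Finset


private lemma gosper_step {K : Type*} [Field K] (a c p q : K) (hc : 1 - c ≠ 0) (hc0 : c ≠ 0)
    (k m : ℕ)
    (hP : ∏ j ∈ range k, (1 - c * q ^ (m + 1) * q ^ j) ≠ 0)
    (hQ : ∏ j ∈ range k, (1 - a * p ^ (m + 1) * p ^ j) ≠ 0)
    (hu : 1 - c * q ^ m ≠ 0) (hv : 1 - a * p ^ m ≠ 0) :
    (1 - a * p ^ m * q ^ m) *
          (∏ j ∈ range k, (1 - q ^ (m + 1) * q ^ j)) *
          (∏ j ∈ range k, (1 - a * p ^ (m + 1) / c * p ^ j)) * c ^ k /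
          ((∏ j ∈ range (k + 1), (1 - c * q ^ m * q ^ j)) *
            ∏ j ∈ range (k + 1), (1 - a * p ^ m * p ^ j))
    = (∏ j ∈ range k, (1 - q ^ (m + 1) * q ^ j)) *
          (∏ j ∈ range k, (1 - a * p ^ (m + 1) / c * p ^ j)) * c ^ k /
          ((1 - c) * (∏ j ∈ range k, (1 - c * q ^ (m + 1) * q ^ j)) *
            ∏ j ∈ range k, (1 - a * p ^ (m + 1) * p ^ j))
      - (∏ j ∈ range (k + 1), (1 - q ^ m * q ^ j)) *
          (∏ j ∈ range (k + 1), (1 - a * p ^ m / c * p ^ j)) * c ^ (k + 1) /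
          ((1 - c) * (∏ j ∈ range (k + 1), (1 - c * q ^ m * q ^ j)) *
            ∏ j ∈ range (k + 1), (1 - a * p ^ m * p ^ j)) := by
  have e1 : ∏ j ∈ range (k + 1), (1 - c * q ^ m * q ^ j)
      = (∏ j ∈ range k, (1 - c * q ^ (m + 1) * q ^ j)) * (1 - c * q ^ m) := by
    rw [Finset.prod_range_succ', pow_zero, mul_one]
    congr 1
    exact Finset.prod_congr rfl fun j _ => by ring
  have e2 : ∏ j ∈ range (k + 1), (1 - a * p ^ m * p ^ j)
      = (∏ j ∈ range k, (1 - a * p ^ (m + 1) * p ^ j)) * (1 - a * p ^ m) := by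
    rw [Finset.prod_range_succ', pow_zero, mul_one]
    congr 1
    exact Finset.prod_congr rfl fun j _ => by ring
  have e3 : ∏ j ∈ range (k + 1), (1 - q ^ m * q ^ j)
      = (∏ j ∈ range k, (1 - q ^ (m + 1) * q ^ j)) * (1 - q ^ m) := by
    rw [Finset.prod_range_succ', pow_zero, mul_one]
    congr 1
    exact Finset.prod_congr rfl fun j _ => by ring
  have e4 : ∏ j ∈ range (k + 1), (1 - a * p ^ m / c * p ^ j)
      = (∏ j ∈ range k, (1 - a * p ^ (m + 1) / c * p ^ j)) * (1 - a * p ^ m / c) := by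
    rw [Finset.prod_range_succ', pow_zero, mul_one]
    congr 1
    refine Finset.prod_congr rfl fun j _ => ?_
    rw [pow_succ]; ring
  rw [e1, e2, e3, e4]
  generalize hXd : ∏ j ∈ range k, (1 - q ^ (m + 1) * q ^ j) = X
  generalize hYd : ∏ j ∈ range k, (1 - a * p ^ (m + 1) / c * p ^ j) = Y
  generalize hPd : ∏ j ∈ range k, (1 - c * q ^ (m + 1) * q ^ j) = P at hP
  generalize hQd : ∏ j ∈ range k, (1 - a * p ^ (m + 1) * p ^ j) = Q at hQ
  have hD1 : (P * (1 - c * q ^ m)) * (Q * (1 - a * p ^ m)) ≠ 0 :=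
    mul_ne_zero (mul_ne_zero hP hu) (mul_ne_zero hQ hv)
  have hD2 : (1 - c) * P * Q ≠ 0 := mul_ne_zero (mul_ne_zero hc hP) hQ
  have hD3 : (1 - c) * (P * (1 - c * q ^ m)) * (Q * (1 - a * p ^ m)) ≠ 0 :=
    mul_ne_zero (mul_ne_zero hc (mul_ne_zero hP hu)) (mul_ne_zero hQ hv)
  rw [div_sub_div _ _ hD2 hD3, div_eq_div_iff hD1 (mul_ne_zero hD2 hD3)]
  field_simp
  ring

private lemma split_prod {K : Type*} [CommRing K] (x y : K) (m k : ℕ) :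
    ∏ j ∈ range (k + 1), (1 - x * y ^ m * y ^ j)
      = (∏ j ∈ range k, (1 - x * y ^ (m + 1) * y ^ j)) * (1 - x * y ^ m) := by
  rw [Finset.prod_range_succ', pow_zero, mul_one]
  congr 1
  exact Finset.prod_congr rfl fun j _ => by ring

/-- **Gosper's bibasic identity, equivalent form.**
Let `K` be a field, `n ≥ 0`, and `a, c, p, q ∈ K` with `1 - c ≠ 0`, `c ≠ 0`, and
all factors `(c q^(n-k);q)_{k+1}` and `(a p^(n-k);p)_{k+1}` nonzero for `0 ≤ k ≤ n`.
Then
`∑_{k=0}^{n} (1 - a p^(n-k) q^(n-k)) (q^(n-k+1);q)_k (a p^(n-k+1)/c;p)_k c^k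
    / ((c q^(n-k);q)_{k+1} (a p^(n-k);p)_{k+1}) = 1/(1 - c)`. -/
theorem gosper_bibasic_equiv {K : Type*} [Field K] (n : ℕ) (a c p q : K)
    (hc : 1 - c ≠ 0) (hc0 : c ≠ 0)
    (hcq : ∀ k ≤ n, ∏ j ∈ range (k + 1), (1 - c * q ^ (n - k) * q ^ j) ≠ 0)
    (hap : ∀ k ≤ n, ∏ j ∈ range (k + 1), (1 - a * p ^ (n - k) * p ^ j) ≠ 0) :
    ∑ k ∈ range (n + 1),
        (1 - a * p ^ (n - k) * q ^ (n - k)) *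
          (∏ j ∈ range k, (1 - q ^ (n - k + 1) * q ^ j)) *
          (∏ j ∈ range k, (1 - a * p ^ (n - k + 1) / c * p ^ j)) * c ^ k /
          ((∏ j ∈ range (k + 1), (1 - c * q ^ (n - k) * q ^ j)) *
            ∏ j ∈ range (k + 1), (1 - a * p ^ (n - k) * p ^ j))
      = 1 / (1 - c) := by
  set f : ℕ → K := fun m =>
    (∏ j ∈ range m, (1 - q ^ (n + 1 - m) * q ^ j)) *
      (∏ j ∈ range m, (1 - a * p ^ (n + 1 - m) / c * p ^ j)) * c ^ m /
      ((1 - c) * (∏ j ∈ range m, (1 - c * q ^ (n + 1 - m) * q ^ j)) *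
        ∏ j ∈ range m, (1 - a * p ^ (n + 1 - m) * p ^ j)) with hf
  have hsum : ∑ k ∈ range (n + 1),
        (1 - a * p ^ (n - k) * q ^ (n - k)) *
          (∏ j ∈ range k, (1 - q ^ (n - k + 1) * q ^ j)) *
          (∏ j ∈ range k, (1 - a * p ^ (n - k + 1) / c * p ^ j)) * c ^ k /
          ((∏ j ∈ range (k + 1), (1 - c * q ^ (n - k) * q ^ j)) *
            ∏ j ∈ range (k + 1), (1 - a * p ^ (n - k) * p ^ j))
      = ∑ k ∈ range (n + 1), (f k - f (k + 1)) := by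
    refine Finset.sum_congr rfl fun k hk => ?_
    have hk' : k ≤ n := by
      have := Finset.mem_range.mp hk; omega
    have h1 : n + 1 - k = n - k + 1 := by omega
    have h2 : n + 1 - (k + 1) = n - k := by omega
    have hq' := hcq k hk'
    have hp' := hap k hk'
    rw [split_prod c q (n - k) k] at hq'
    rw [split_prod a p (n - k) k] at hp'
    simp only [hf, h1, h2]
    exact gosper_step a c p q hc hc0 k (n - k)
      (left_ne_zero_of_mul hq') (left_ne_zero_of_mul hp')
      (right_ne_zero_of_mul hq') (right_ne_zero_of_mul hp')
  rw [hsum, Finset.sum_range_sub' f (n + 1)]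
  have h0 : f 0 = 1 / (1 - c) := by simp [hf]
  have hend : f (n + 1) = 0 := by
    have hz : (∏ x ∈ range (n + 1), (1 - q ^ x)) = 0 :=
      Finset.prod_eq_zero (Finset.mem_range.mpr (Nat.succ_pos n)) (by simp)
    simp [hf, hz]
  rw [h0, hend, sub_zero]
end
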